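/- arXiv:2401.15662 — 13 statements merged into one kernel-verified Lean document; each statement's English description precedes it below -/
import Mathlib

section
/- Let R be a monotone transit function on a finite set X. Then axioms (w), (w₂), and (w₃) are pairwise equivalent. -/
variable {X : Type*}

/-- Transit function axioms (t1),(t2),(t3). -/
def IsTransit (R : X → X → Set X) : Prop :=
  (∀ u v, u ∈ R u v) ∧ (∀ u v, R u v = R v u) ∧ (∀ u, R u u = {u})

/-- Monotonicity axiom (m). -/
def AxM (R : X → X → Set X) : Prop :=
  ∀ u v p q, p ∈ R u v → q ∈ R u v → R p q ⊆ R u v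

/-- Axiom (w). -/
def AxW (R : X → X → Set X) : Prop :=
  ∀ x y z, z ∈ R x y ∨ y ∈ R x z ∨ x ∈ R y z

/-- Axiom (w₂). -/
def AxW2 (R : X → X → Set X) : Prop :=
  ∀ p q u v s t,
    R p q ∩ R u v ∩ R s t = R p q ∩ R u v ∨
    R p q ∩ R u v ∩ R s t = R p q ∩ R s t ∨
    R p q ∩ R u v ∩ R s t = R u v ∩ R s t

/-- Axiom (w₃). -/
def AxW3 (R : X → X → Set X) : Prop :=
  ∀ u v p q x y z, x ∈ R u v → x ∉ R p q → y ∈ R u v → y ∈ R p q →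
    z ∈ R p q → z ∉ R u v → y ∈ R x z

/-- Axiom (x'). -/
def AxX' (R : X → X → Set X) : Prop :=
  ∀ x y z, z ∉ R x y → R x y ⊆ R x z ∪ R z y

/-- Axiom (x). -/
def AxX (R : X → X → Set X) : Prop :=
  ∀ x y z, R x y ⊆ R x z ∪ R z y

/-- Axiom (u). -/
def AxU (R : X → X → Set X) : Prop :=
  ∀ x y z, z ∈ R x y → R x y = R x z ∪ R z y

/-- Axiom (mm). -/
def AxMM (R : X → X → Set X) : Prop :=
  ∀ x y u v, (R x y ∩ R u v).Nonempty →
    ∃ p ∈ R x y ∪ R u v, ∃ q ∈ R x y ∪ R u v, R x y ∪ R u v ⊆ R p q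

/-- Axiom (uc). -/
def AxUC (R : X → X → Set X) : Prop :=
  ∀ x y u v, (R x y ∩ R u v).Nonempty →
    ∃ p ∈ R x y ∪ R u v, ∃ q ∈ R x y ∪ R u v, R x y ∪ R u v = R p q

/-- Axiom (a'). -/
def AxA' (R : X → X → Set X) : Prop :=
  ∃ u v, R u v = Set.univ

/-- Axiom (k). -/
def AxK (R : X → X → Set X) : Prop :=
  ∀ u v x y, (R u v ∩ R x y).Nonempty → ∃ p q, R u v ∩ R x y = R p q

/-- Axiom (wp). -/
def AxWP (R : X → X → Set X) : Prop :=
  ∀ u v x y p q, (R u v ∩ R x y).Nonempty → (R u v ∩ R p q).Nonempty →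
    (R x y ∩ R p q).Nonempty →
    R p q ⊆ R u v ∪ R x y ∨ R u v ⊆ R p q ∪ R x y ∨ R x y ⊆ R p q ∪ R u v

/-- Axiom (o). -/
def AxO (R : X → X → Set X) : Prop :=
  ∀ u v, ∃ p ∈ R u v, ∃ q ∈ R u v, ∀ z ∈ R u v, R p z ∪ R z q = R u v

/-- Axiom (o'). -/
def AxO' (R : X → X → Set X) : Prop :=
  ∀ u v, ∀ z ∈ R u v, ∃ p ∈ R u v, ∃ q ∈ R u v, R p z ∪ R z q = R u v

/-- Weak hierarchy condition for a set system. -/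
def WeakHierarchy (𝒞 : Set (Set X)) : Prop :=
  ∀ A ∈ 𝒞, ∀ B ∈ 𝒞, ∀ C ∈ 𝒞,
    A ∩ B ∩ C = A ∩ B ∨ A ∩ B ∩ C = A ∩ C ∨ A ∩ B ∩ C = B ∩ C

theorem stmt0 {X : Type*} [Fintype X] (R : X → X → Set X)
    (hT : IsTransit R) (hM : AxM R) :
    (AxW R ↔ AxW2 R) ∧ (AxW R ↔ AxW3 R) := by
  obtain ⟨ht1, ht2, ht3⟩ := hT
  have hself : ∀ u v : X, v ∈ R u v := fun u v => (ht2 v u) ▸ ht1 v u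
  have hW2 : AxW R → AxW2 R := by
    intro hw p q u v s t
    set A := R p q; set B := R u v; set C := R s t
    by_contra hcon
    push_neg at hcon
    obtain ⟨h1, h2, h3⟩ := hcon
    have e1 : ¬ (A ∩ B ⊆ C) := fun hsub => h1 (by
      apply Set.Subset.antisymm (Set.inter_subset_left)
      intro x hx; exact ⟨hx, hsub hx⟩)
    have e2 : ¬ (A ∩ C ⊆ B) := fun hsub => h2 (by
      apply Set.Subset.antisymm
      · intro x hx; exact ⟨hx.1.1, hx.2⟩
      · intro x hx; exact ⟨⟨hx.1, hsub hx⟩, hx.2⟩)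
    have e3 : ¬ (B ∩ C ⊆ A) := fun hsub => h3 (by
      apply Set.Subset.antisymm
      · intro x hx; exact ⟨hx.1.2, hx.2⟩
      · intro x hx; exact ⟨⟨hsub hx, hx.1⟩, hx.2⟩)
    obtain ⟨a, ⟨haA, haB⟩, haC⟩ := Set.not_subset.mp e1
    obtain ⟨b, ⟨hbA, hbC⟩, hbB⟩ := Set.not_subset.mp e2
    obtain ⟨c, ⟨hcB, hcC⟩, hcA⟩ := Set.not_subset.mp e3
    rcases hw a b c with h | h | h
    · exact hcA (hM p q a b haA hbA h)
    · exact hbB (hM u v a c haB hcB h)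
    · exact haC (hM s t b c hbC hcC h)
  have hW2W : AxW2 R → AxW R := by
    intro hw2 x y z
    rcases hw2 x y x z y z with h | h | h
    · right; right
      have : x ∈ R x y ∩ R x z := ⟨ht1 x y, ht1 x z⟩
      rw [← h] at this; exact this.2
    · right; left
      have : y ∈ R x y ∩ R y z := ⟨hself x y, ht1 y z⟩
      rw [← h] at this; exact this.1.2
    · left
      have : z ∈ R x z ∩ R y z := ⟨hself x z, hself y z⟩
      rw [← h] at this; exact this.1.1
  have hW3 : AxW R → AxW3 R := by
    intro hw u v p q x y z hxA hxB hyA hyB hzB hzA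
    rcases hw x y z with h | h | h
    · exact absurd (hM u v x y hxA hyA h) hzA
    · exact h
    · exact absurd (hM p q y z hyB hzB h) hxB
  have hW3W : AxW3 R → AxW R := by
    intro hw3 x y z
    by_cases h1 : z ∈ R x y
    · exact Or.inl h1
    by_cases h2 : x ∈ R y z
    · exact Or.inr (Or.inr h2)
    exact Or.inr (Or.inl (hw3 x y y z x y z (ht1 x y) h2 (hself x y) (ht1 y z) (hself y z) h1))
  exact ⟨⟨hW2, hW2W⟩, ⟨hW3, hW3W⟩⟩
end

section
/- A monotone transit function satisfying axiom (w) also satisfies axiom (x'). -/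
variable {X : Type*}

theorem stmt1 {X : Type*} (R : X → X → Set X)
    (hT : IsTransit R) (hM : AxM R) (hW : AxW R) : AxX' R := by
  obtain ⟨h1, h2, h3⟩ := hT
  intro x y z hz w hw
  rcases hW x y z with h | h | h
  · exact absurd h hz
  · left
    exact hM x z x y (h1 x z) h hw
  · right
    rw [h2 z y]
    rw [h2 x y] at hw
    exact hM y z y x (h1 y z) h hw
end

section
/- A set system C ⊆ 2^X satisfies condition (W') if and only if C is a weak hierarchy. Condition (W'): for all A,B,C ∈ C, if A∩(B\C) ≠ ∅ and A∩(C\B) ≠ ∅ then B∩C ⊆ A. -/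
variable {X : Type*}

theorem stmt3 {X : Type*} [Fintype X] [Nonempty X] (𝒞 : Set (Set X)) :
    (∀ A ∈ 𝒞, ∀ B ∈ 𝒞, ∀ C ∈ 𝒞,
        (A ∩ (B \ C)).Nonempty → (A ∩ (C \ B)).Nonempty → B ∩ C ⊆ A) ↔
    WeakHierarchy 𝒞 := by
  constructor
  · intro h A hA B hB C hC
    by_cases h1 : A ∩ B ∩ C = A ∩ B
    · exact Or.inl h1
    by_cases h2 : A ∩ B ∩ C = A ∩ C
    · exact Or.inr (Or.inl h2)
    refine Or.inr (Or.inr ?_)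
    have hne1 : (A ∩ (B \ C)).Nonempty := by
      by_contra hne
      apply h1
      ext x
      simp only [Set.not_nonempty_iff_eq_empty, Set.eq_empty_iff_forall_notMem] at hne
      constructor
      · intro hx; exact ⟨hx.1.1, hx.1.2⟩
      · intro hx
        by_cases hc : x ∈ C
        · exact ⟨hx, hc⟩
        · exact absurd (⟨hx.1, hx.2, hc⟩ : x ∈ A ∩ (B \ C)) (hne x)
    have hne2 : (A ∩ (C \ B)).Nonempty := by
      by_contra hne
      apply h2
      ext x
      simp only [Set.not_nonempty_iff_eq_empty, Set.eq_empty_iff_forall_notMem] at hne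
      constructor
      · intro hx; exact ⟨hx.1.1, hx.2⟩
      · intro hx
        by_cases hb : x ∈ B
        · exact ⟨⟨hx.1, hb⟩, hx.2⟩
        · exact absurd (⟨hx.1, hx.2, hb⟩ : x ∈ A ∩ (C \ B)) (hne x)
    have hsub := h A hA B hB C hC hne1 hne2
    ext x
    exact ⟨fun hx => ⟨hx.1.2, hx.2⟩, fun hx => ⟨⟨hsub hx, hx.1⟩, hx.2⟩⟩
  · intro h A hA B hB C hC hx hy z hz
    obtain ⟨x, hxA, hxB, hxC⟩ := hx
    obtain ⟨y, hyA, hyC, hyB⟩ := hy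
    rcases h A hA B hB C hC with heq | heq | heq
    · have : x ∈ A ∩ B ∩ C := heq.symm.subset ⟨hxA, hxB⟩
      exact absurd this.2 hxC
    · have : y ∈ A ∩ B ∩ C := heq.symm.subset ⟨hyA, hyC⟩
      exact absurd this.1.2 hyB
    · have : z ∈ A ∩ B ∩ C := heq.symm.subset hz
      exact this.1.1
end

section
/- A transit function satisfying axiom (mm) also satisfies axiom (a'), i.e., there exist u,v ∈ X with R(u,v)=X. -/
variable {X : Type*}

theorem stmt4 {X : Type*} [Fintype X] [Nonempty X] (R : X → X → Set X)
    (hT : IsTransit R) (hMM : AxMM R) : AxA' R := by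
  obtain ⟨⟨u, v⟩, hmax⟩ := Finite.exists_max (fun p : X × X => (R p.1 p.2).ncard)
  refine ⟨u, v, Set.eq_univ_of_forall fun z => ?_⟩
  have hz : z ∈ R u z := (hT.2.1 u z) ▸ hT.1 z u
  have hne : (R u v ∩ R u z).Nonempty := ⟨u, hT.1 u v, hT.1 u z⟩
  obtain ⟨p, _, q, _, hsub⟩ := hMM u v u z hne
  have h1 : R u v ⊆ R p q := fun x hx => hsub (Or.inl hx)
  have h2 : (R p q).ncard ≤ (R u v).ncard := hmax (p, q)
  have heq : R u v = R p q := Set.eq_of_subset_of_ncard_le h1 h2 (Set.toFinite _)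
  rw [heq]; exact hsub (Or.inr hz)
end

section
/- Let R be a monotone transit function on a finite set X. Then axiom (w) implies axiom (mm). -/
variable {X : Type*}

theorem stmt5 {X : Type*} [Fintype X] (R : X → X → Set X)
    (hT : IsTransit R) (hM : AxM R) (hW : AxW R) : AxMM R := by
  obtain ⟨h1, h2, _⟩ := hT
  have mem2 : ∀ a b, b ∈ R a b := fun a b => (h2 b a) ▸ h1 b a
  intro x y u v _
  -- it suffices to find p q in the union with all four endpoints in R p q
  have key : ∀ p q, p ∈ R x y ∪ R u v → q ∈ R x y ∪ R u v →
      x ∈ R p q → y ∈ R p q → u ∈ R p q → v ∈ R p q →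
      ∃ p ∈ R x y ∪ R u v, ∃ q ∈ R x y ∪ R u v, R x y ∪ R u v ⊆ R p q := by
    intro p q hp hq hx hy hu hv
    exact ⟨p, hp, q, hq, Set.union_subset (hM p q x y hx hy) (hM p q u v hu hv)⟩
  rcases hW x y u with hA | hB | hC
  · rcases hW x y v with hA1 | hA2 | hA3
    · exact key x y (Or.inl (h1 x y)) (Or.inl (mem2 x y)) (h1 x y) (mem2 x y) hA hA1
    · exact key x v (Or.inl (h1 x y)) (Or.inr (mem2 u v)) (h1 x v) hA2
        (hM x v x y (h1 x v) hA2 hA) (mem2 x v)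
    · exact key y v (Or.inl (mem2 x y)) (Or.inr (mem2 u v)) hA3 (h1 y v)
        (hM y v x y hA3 (h1 y v) hA) (mem2 y v)
  · rcases hW x u v with hB1 | hB2 | hB3
    · exact key x u (Or.inl (h1 x y)) (Or.inr (h1 u v)) (h1 x u) hB (mem2 x u) hB1
    · exact key x v (Or.inl (h1 x y)) (Or.inr (mem2 u v)) (h1 x v)
        (hM x v x u (h1 x v) hB2 hB) hB2 (mem2 x v)
    · exact key u v (Or.inr (h1 u v)) (Or.inr (mem2 u v)) hB3
        (hM u v x u hB3 (h1 u v) hB) (h1 u v) (mem2 u v)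
  · rcases hW y u v with hC1 | hC2 | hC3
    · exact key y u (Or.inl (mem2 x y)) (Or.inr (h1 u v)) hC (h1 y u) (mem2 y u) hC1
    · exact key y v (Or.inl (mem2 x y)) (Or.inr (mem2 u v))
        (hM y v y u (h1 y v) hC2 hC) (h1 y v) hC2 (mem2 y v)
    · exact key u v (Or.inr (h1 u v)) (Or.inr (mem2 u v))
        (hM u v y u hC3 (h1 u v) hC) hC3 (h1 u v) (mem2 u v)
end

section
/- A monotone transit function R on a finite set X satisfies (w) if and only if it satisfies both (mm) and (x'). -/
variable {X : Type*}

private lemma mem_right' {X : Type*} (R : X → X → Set X) (hT : IsTransit R) (u v : X) :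
    v ∈ R u v := hT.2.1 v u ▸ hT.1 v u

private lemma mm_aux2 {X : Type*} (R : X → X → Set X) (hT : IsTransit R) (hM : AxM R)
    (hW : AxW R) (x y u v : X) (hyv : y ∈ R x v) :
    ∃ p ∈ R x y ∪ R u v, ∃ q ∈ R x y ∪ R u v, R x y ∪ R u v ⊆ R p q := by
  have hxv : x ∈ R x v := hT.1 x v
  have hvv : v ∈ R x v := mem_right' R hT x v
  rcases hW x v u with hu | hv | hx
  · exact ⟨x, Or.inl (hT.1 x y), v, Or.inr (mem_right' R hT u v),
      Set.union_subset (hM x v x y hxv hyv) (hM x v u v hu hvv)⟩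
  · have hxu : x ∈ R x u := hT.1 x u
    have hyu : y ∈ R x u := hM x u x v hxu hv hyv
    exact ⟨x, Or.inl (hT.1 x y), u, Or.inr (hT.1 u v),
      Set.union_subset (hM x u x y hxu hyu) (hM x u u v (mem_right' R hT x u) hv)⟩
  · have hx' : x ∈ R u v := hT.2.1 v u ▸ hx
    have hy' : y ∈ R u v := hM u v x v hx' (mem_right' R hT u v) hyv
    exact ⟨u, Or.inr (hT.1 u v), v, Or.inr (mem_right' R hT u v),
      Set.union_subset (hM u v x y hx' hy') subset_rfl⟩

private lemma mm_aux {X : Type*} (R : X → X → Set X) (hT : IsTransit R) (hM : AxM R)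
    (hW : AxW R) (x y u v : X) (hv : v ∉ R x y) :
    ∃ p ∈ R x y ∪ R u v, ∃ q ∈ R x y ∪ R u v, R x y ∪ R u v ⊆ R p q := by
  rcases hW x y v with h | h | h
  · exact absurd h hv
  · exact mm_aux2 R hT hM hW x y u v h
  · have := mm_aux2 R hT hM hW y x u v h
    rw [hT.2.1 y x] at this
    exact this

theorem stmt6 {X : Type*} [Fintype X] (R : X → X → Set X)
    (hT : IsTransit R) (hM : AxM R) :
    AxW R ↔ (AxMM R ∧ AxX' R) := by
  constructor
  · intro hW
    refine ⟨?_, ?_⟩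
    · intro x y u v _
      by_cases hv : v ∈ R x y
      · by_cases hu : u ∈ R x y
        · exact ⟨x, Or.inl (hT.1 x y), y, Or.inl (mem_right' R hT x y),
            Set.union_subset subset_rfl (hM x y u v hu hv)⟩
        · have := mm_aux R hT hM hW x y v u hu
          rw [hT.2.1 v u] at this
          exact this
      · exact mm_aux R hT hM hW x y u v hv
    · intro x y z hz
      rcases hW x y z with h | h | h
      · exact absurd h hz
      · exact (hM x z x y (hT.1 x z) h).trans Set.subset_union_left
      · have hx' : x ∈ R z y := hT.2.1 y z ▸ h
        exact (hM z y x y hx' (mem_right' R hT z y)).trans Set.subset_union_right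
  · rintro ⟨hMM, hX⟩ x y z
    by_contra hcon
    push_neg at hcon
    obtain ⟨hz, hy, hx⟩ := hcon
    obtain ⟨p, hp, q, hq, hsub⟩ := hMM x y x z ⟨x, hT.1 x y, hT.1 x z⟩
    have zmem : z ∈ R p q := hsub (Or.inr (mem_right' R hT x z))
    have ymem : y ∈ R p q := hsub (Or.inl (mem_right' R hT x y))
    have xmem : x ∈ R p q := hsub (Or.inl (hT.1 x y))
    have con1 : p ∈ R x y → q ∈ R x y → False := fun a b => hz (hM x y p q a b zmem)
    have con2 : p ∈ R x z → q ∈ R x z → False := fun a b => hy (hM x z p q a b ymem)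
    have con3 : p ∈ R y z → q ∈ R y z → False := fun a b => hx (hM y z p q a b xmem)
    have key : ∀ a b : X, a ∈ R x y → b ∈ R x z →
        (a ∈ R x y → b ∈ R x y → False) → (a ∈ R x z → b ∈ R x z → False) →
        (a ∈ R y z → b ∈ R y z → False) → False := by
      intro a b ha hb c1 c2 c3
      rcases hX x y z hz ha with h | h
      · exact c2 h hb
      · have ha' : a ∈ R y z := hT.2.1 z y ▸ h
        rcases hX x z y hy hb with h' | h'
        · exact c1 ha h'
        · exact c3 ha' h'
    rcases hp with hp | hp <;> rcases hq with hq | hq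
    · exact con1 hp hq
    · exact key p q hp hq con1 con2 con3
    · exact key q p hq hp (fun a b => con1 b a) (fun a b => con2 b a) (fun a b => con3 b a)
    · exact con2 hp hq
end

section
/- A monotone transit function R on a finite set X satisfying (uc) also satisfies (k): whenever R(u,v) ∩ R(x,y) ≠ ∅, there exist p,q ∈ X with R(u,v) ∩ R(x,y) = R(p,q). -/
variable {X : Type*}

/-
By (m), `A = R(u,v) ∩ R(x,y)` contains `R(p,q)` whenever it contains `p` and `q`.
Pick `p, q ∈ A` with `R(p,q)` maximal under inclusion, which is possible since `A` is finite.
For `z ∈ A`, the intervals `R(p,q)` and `R(p,z)` meet in `p`, so by (uc) their union is an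
interval with endpoints in `A`; maximality forces it to be `R(p,q)`, hence `z ∈ R(p,q)`.
-/

section

variable {R : X → X → Set X}

theorem AxM.interval_subset_inter (hM : AxM R) {u v x y p q : X}
    (hp : p ∈ R u v ∩ R x y) (hq : q ∈ R u v ∩ R x y) : R p q ⊆ R u v ∩ R x y :=
  Set.subset_inter (hM u v p q hp.1 hq.1) (hM x y p q hp.2 hq.2)

theorem subset_interval_of_maximalFor (hmem : ∀ u v, u ∈ R u v) (hsymm : ∀ u v, R u v = R v u)
    (hUC : AxUC R) {A : Set X} (hconv : ∀ p ∈ A, ∀ q ∈ A, R p q ⊆ A) {p q : X}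
    (hmax : MaximalFor (· ∈ A ×ˢ A) (fun pq : X × X => R pq.1 pq.2) (p, q)) :
    A ⊆ R p q := by
  obtain ⟨⟨hp, hq⟩, hmax⟩ := hmax
  intro z hz
  have hz_mem : z ∈ R p z := hsymm p z ▸ hmem z p
  obtain ⟨p', hp', q', hq', hunion⟩ := hUC p q p z ⟨p, hmem p q, hmem p z⟩
  have hunion_sub : R p q ∪ R p z ⊆ A := Set.union_subset (hconv p hp q hq) (hconv p hp z hz)
  have hle : R p q ⊆ R p' q' := hunion ▸ Set.subset_union_left
  exact hmax (j := (p', q')) ⟨hunion_sub hp', hunion_sub hq'⟩ hle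
    (show z ∈ R p' q' from hunion ▸ Or.inr hz_mem)

theorem exists_eq_interval_of_finite (hmem : ∀ u v, u ∈ R u v) (hsymm : ∀ u v, R u v = R v u)
    (hUC : AxUC R) {A : Set X} (hconv : ∀ p ∈ A, ∀ q ∈ A, R p q ⊆ A) (hA : A.Finite)
    (hne : A.Nonempty) : ∃ p q, A = R p q := by
  obtain ⟨⟨p, q⟩, hmax⟩ := (hA.prod hA).exists_maximalFor (fun pq : X × X => R pq.1 pq.2)
    (A ×ˢ A) (hne.prod hne)
  exact ⟨p, q, (subset_interval_of_maximalFor hmem hsymm hUC hconv hmax).antisymm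
    (hconv p hmax.1.1 q hmax.1.2)⟩

end

theorem stmt8 {X : Type*} [Fintype X] (R : X → X → Set X)
    (hT : IsTransit R) (hM : AxM R) (hUC : AxUC R) : AxK R := by
  obtain ⟨hmem, hsymm, -⟩ := hT
  intro u v x y hne
  exact exists_eq_interval_of_finite hmem hsymm hUC
    (fun p hp q hq => hM.interval_subset_inter hp hq) (Set.toFinite _) hne
end

section
/- Let R be a monotone transit function on a finite set X satisfying (uc). If R(u,v), R(s,t), R(w,r) have pairwise nonempty intersections, then R(u,v) ∩ R(s,t) ∩ R(w,r) ≠ ∅ (a Helly-type property). -/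
variable {X : Type*}

theorem stmt9 {X : Type*} [Fintype X] (R : X → X → Set X)
    (hT : IsTransit R) (hM : AxM R) (hUC : AxUC R)
    (u v s t w r : X)
    (h1 : (R u v ∩ R s t).Nonempty) (h2 : (R u v ∩ R w r).Nonempty)
    (h3 : (R s t ∩ R w r).Nonempty) :
    (R u v ∩ R s t ∩ R w r).Nonempty := by
  obtain ⟨ht1, ht2, _⟩ := hT
  have memR : ∀ x y : X, y ∈ R x y := fun x y => (ht2 x y) ▸ ht1 y x
  obtain ⟨a, haA, haB⟩ := h1
  obtain ⟨b, hbA, hbC⟩ := h2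
  obtain ⟨c, hcB, hcC⟩ := h3
  -- S = R b c ⊆ C and S ⊆ A ∪ B
  have hSC : R b c ⊆ R w r := hM w r b c hbC hcC
  obtain ⟨p, hp, q, hq, hpq⟩ := hUC a b a c ⟨a, ht1 a b, ht1 a c⟩
  have hbpq : b ∈ R p q := hpq ▸ (Or.inl (memR a b))
  have hcpq : c ∈ R p q := hpq ▸ (Or.inr (memR a c))
  have hSAB : R b c ⊆ R u v ∪ R s t := by
    refine (hM p q b c hbpq hcpq).trans ?_
    rw [← hpq]
    exact Set.union_subset_union (hM u v a b haA hbA) (hM s t a c haB hcB)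
  -- it suffices to find d ∈ R u v ∩ R s t ∩ R b c
  have suff : ∀ d : X, d ∈ R u v → d ∈ R s t → d ∈ R b c →
      (R u v ∩ R s t ∩ R w r).Nonempty := fun d h1' h2' h3' =>
    ⟨d, ⟨h1', h2'⟩, hSC h3'⟩
  -- apply (uc) to A = R u v and S = R b c, which share b
  obtain ⟨m, hm, n, hn, hmn⟩ := hUC u v b c ⟨b, hbA, ht1 b c⟩
  by_cases hAA : m ∈ R u v ∧ n ∈ R u v
  · -- then R b c ⊆ R u v, so c works
    have : R b c ⊆ R u v := by
      refine Set.Subset.trans ?_ (hM u v m n hAA.1 hAA.2)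
      rw [← hmn]; exact Set.subset_union_right
    exact suff c (this (memR b c)) hcB (memR b c)
  by_cases hSS : m ∈ R b c ∧ n ∈ R b c
  · -- then R u v ⊆ R b c, so a works
    have : R u v ⊆ R b c := by
      refine Set.Subset.trans ?_ (hM b c m n hSS.1 hSS.2)
      rw [← hmn]; exact Set.subset_union_left
    exact suff a haA haB (this haA)
  -- otherwise get n₀ ∈ R b c with n₀ ∉ R u v, hence n₀ ∈ R s t
  obtain ⟨n₀, hn₀S, hn₀A⟩ : ∃ n₀, n₀ ∈ R b c ∧ n₀ ∉ R u v := by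
    rcases Classical.em (m ∈ R u v) with hmA | hmA
    · rcases Classical.em (n ∈ R u v) with hnA | hnA
      · exact absurd ⟨hmA, hnA⟩ hAA
      · exact ⟨n, hn.resolve_left hnA, hnA⟩
    · exact ⟨m, hm.resolve_left hmA, hmA⟩
  have hn₀B : n₀ ∈ R s t := (hSAB hn₀S).resolve_left hn₀A
  -- T = R a n₀ ⊆ B and T ⊆ A ∪ S
  have hTB : R a n₀ ⊆ R s t := hM s t a n₀ haB hn₀B
  have haMN : a ∈ R m n := hmn ▸ (Or.inl haA)
  have hn₀MN : n₀ ∈ R m n := hmn ▸ (Or.inr hn₀S)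
  have hTAS : R a n₀ ⊆ R u v ∪ R b c := by
    refine (hM m n a n₀ haMN hn₀MN).trans ?_
    rw [← hmn]
  -- apply (uc) to S = R b c and T = R a n₀, which share n₀
  obtain ⟨g, hg, h, hh, hgh⟩ := hUC b c a n₀ ⟨n₀, hn₀S, memR a n₀⟩
  -- helper: if both ends in S then T ⊆ S so a works
  have caseSS : g ∈ R b c → h ∈ R b c → (R u v ∩ R s t ∩ R w r).Nonempty := by
    intro hgS hhS
    have : R a n₀ ⊆ R b c := by
      refine Set.Subset.trans ?_ (hM b c g h hgS hhS)
      rw [← hgh]; exact Set.subset_union_right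
    exact suff a haA haB (this (ht1 a n₀))
  have caseTT : g ∈ R a n₀ → h ∈ R a n₀ → (R u v ∩ R s t ∩ R w r).Nonempty := by
    intro hgT hhT
    have : R b c ⊆ R a n₀ := by
      refine Set.Subset.trans ?_ (hM a n₀ g h hgT hhT)
      rw [← hgh]; exact Set.subset_union_left
    exact suff b hbA (hTB (this (ht1 b c))) (ht1 b c)
  -- mixed case: one end g' ∈ S, the other h' ∈ T \ S, so h' ∈ A ∩ B
  have mixed : ∀ g' h', g' ∈ R b c → h' ∈ R a n₀ → h' ∉ R b c →
      R b c ∪ R a n₀ = R g' h' → (R u v ∩ R s t ∩ R w r).Nonempty := by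
    intro g' h' hg'S hh'T hh'S hgh'
    have hh'A : h' ∈ R u v := (hTAS hh'T).resolve_right hh'S
    have hh'B : h' ∈ R s t := hTB hh'T
    have hSsub : R b c ⊆ R g' h' := by rw [← hgh']; exact Set.subset_union_left
    rcases hSAB hg'S with hg'A | hg'B
    · -- R g' h' ⊆ A, so c ∈ A
      have : R b c ⊆ R u v := hSsub.trans (hM u v g' h' hg'A hh'A)
      exact suff c (this (memR b c)) hcB (memR b c)
    · -- R g' h' ⊆ B, so b ∈ B
      have : R b c ⊆ R s t := hSsub.trans (hM s t g' h' hg'B hh'B)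
      exact suff b hbA (this (ht1 b c)) (ht1 b c)
  rcases hg with hgS | hgT
  · rcases hh with hhS | hhT
    · exact caseSS hgS hhS
    · rcases Classical.em (h ∈ R b c) with hhS | hhS
      · exact caseSS hgS hhS
      · exact mixed g h hgS hhT hhS hgh
  · rcases hh with hhS | hhT
    · rcases Classical.em (g ∈ R b c) with hgS | hgS
      · exact caseSS hgS hhS
      · have hgh' : R b c ∪ R a n₀ = R h g := by rw [hgh, ht2]
        exact mixed h g hhS hgT hgS hgh'
    · exact caseTT hgT hhT
end

section
/- Let R be a monotone transit function. Then (uc) implies (u): z ∈ R(x,y) implies R(x,y) = R(x,z) ∪ R(z,y). -/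
variable {X : Type*}

theorem stmt10 {X : Type*} (R : X → X → Set X)
    (hT : IsTransit R) (hM : AxM R) (hUC : AxUC R) : AxU R := by
  obtain ⟨h1, h2, h3⟩ := hT
  intro x y z hz
  have hxy : x ∈ R x y := h1 x y
  have hyx : y ∈ R x y := (h2 y x) ▸ h1 y x
  have hxz : R x z ⊆ R x y := hM x y x z hxy hz
  have hzy : R z y ⊆ R x y := hM x y z y hz hyx
  have hne : (R x z ∩ R z y).Nonempty :=
    ⟨z, (h2 z x) ▸ h1 z x, h1 z y⟩
  obtain ⟨p, hp, q, hq, heq⟩ := hUC x z z y hne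
  have hsub : R x z ∪ R z y ⊆ R x y := Set.union_subset hxz hzy
  apply Set.Subset.antisymm _ hsub
  have hx' : x ∈ R p q := heq ▸ Or.inl (h1 x z)
  have hy' : y ∈ R p q := heq ▸ Or.inr ((h2 y z) ▸ h1 y z)
  calc R x y ⊆ R p q := hM p q x y hx' hy'
    _ = R x z ∪ R z y := heq.symm
end

section
/- A monotone transit function R satisfies (x) if and only if it satisfies both (u) and (x'). -/
variable {X : Type*}

theorem stmt12 {X : Type*} (R : X → X → Set X)
    (hT : IsTransit R) (hM : AxM R) :
    AxX R ↔ (AxU R ∧ AxX' R) := by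
  obtain ⟨h1, h2, h3⟩ := hT
  constructor
  · intro hx
    refine ⟨?_, fun x y z _ => hx x y z⟩
    intro x y z hz
    apply Set.Subset.antisymm (hx x y z)
    intro w hw
    rcases hw with hw | hw
    · exact hM x y x z (h1 x y) hz hw
    · exact hM x y z y hz (by rw [h2]; exact h1 y x) hw
  · rintro ⟨hu, hx'⟩ x y z
    by_cases hz : z ∈ R x y
    · exact (hu x y z hz).le
    · exact hx' x y z hz
end

section
/- A monotone transit function R satisfying (uc) also satisfies (x): for all x,y,z, R(x,y) ⊆ R(x,z) ∪ R(z,y). -/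
variable {X : Type*}

theorem stmt13 {X : Type*} (R : X → X → Set X)
    (hT : IsTransit R) (hM : AxM R) (hUC : AxUC R) : AxX R := by
  obtain ⟨h1, h2, h3⟩ := hT
  intro x y z w hw
  have hne : (R x z ∩ R z y).Nonempty := ⟨z, by rw [h2 x z]; exact h1 z x, h1 z y⟩
  obtain ⟨p, hp, q, hq, heq⟩ := hUC x z z y hne
  have hx : x ∈ R p q := by rw [← heq]; exact Or.inl (h1 x z)
  have hy : y ∈ R p q := by rw [← heq, h2 z y]; exact Or.inr (h1 y z)
  have := hM p q x y hx hy hw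
  rwa [← heq] at this
end

section
/- Every monotone pyramidal transit function R satisfies (o): for all u,v ∈ X there are p,q ∈ R(u,v) such that for every z ∈ R(u,v), R(p,z) ∪ R(z,q) = R(u,v). -/
variable {X : Type*}

theorem stmt15 {X : Type*} [Fintype X] (R : X → X → Set X)
    (hT : IsTransit R) (hM : AxM R)
    (hPy : ∃ _o : LinearOrder X, ∀ u v x y w : X,
      x ∈ R u v → y ∈ R u v → _o.lt x w → _o.lt w y → w ∈ R u v) :
    AxO R := by
  obtain ⟨hT1, hT2, hT3⟩ := hT
  obtain ⟨o, hpy⟩ := hPy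
  letI := o
  intro u v
  have hne : (R u v).Nonempty := ⟨u, hT1 u v⟩
  obtain ⟨p, hp, hpmin⟩ := Set.exists_min_image (R u v) id (Set.toFinite _) hne
  obtain ⟨q, hq, hqmax⟩ := Set.exists_max_image (R u v) id (Set.toFinite _) hne
  refine ⟨p, hp, q, hq, fun z hz => ?_⟩
  apply Set.Subset.antisymm
  · exact Set.union_subset (hM u v p z hp hz) (hM u v z q hz hq)
  · intro w hw
    rcases le_total w z with hwz | hzw
    · left
      rcases eq_or_lt_of_le (hpmin w hw) with h | h
      · simp only [id] at h; rw [← h]; exact hT1 p z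
      · rcases eq_or_lt_of_le hwz with h2 | h2
        · rw [h2, hT2]; exact hT1 z p
        · exact hpy p z p z w (hT1 p z) (hT2 p z ▸ hT1 z p) h h2
    · right
      rcases eq_or_lt_of_le (hqmax w hw) with h | h
      · simp only [id] at h; rw [h, hT2]; exact hT1 q z
      · rcases eq_or_lt_of_le hzw with h2 | h2
        · rw [← h2]; exact hT1 z q
        · exact hpy z q z q w (hT1 z q) (hT2 z q ▸ hT1 q z) h2 h
end

section
/- Let R be a monotone transit function on a finite set X satisfying (wp). Then R satisfies (o'): for all u,v ∈ X and z ∈ R(u,v) there exist p,q ∈ R(u,v) with R(p,z) ∪ R(z,q) = R(u,v). -/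
variable {X : Type*}

theorem stmt16 {X : Type*} [Fintype X] (R : X → X → Set X)
    (hT : IsTransit R) (hM : AxM R) (hWP : AxWP R) : AxO' R := by
  classical
  obtain ⟨ht1, ht2, ht3⟩ := hT
  intro u v z hz
  have hzz : ∀ a, z ∈ R a z := fun a => (ht2 a z) ▸ ht1 z a
  set T : Finset (X × X) :=
    Finset.univ.filter (fun s => s.1 ∈ R u v ∧ s.2 ∈ R u v) with hTdef
  have hvne : v ∈ R u v := (ht2 u v) ▸ ht1 v u
  have hne : T.Nonempty := ⟨(u, v), by simp [hTdef, ht1 u v, hvne]⟩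
  obtain ⟨s, hsT, hmax⟩ :=
    T.exists_max_image (fun s => (R s.1 z ∪ R z s.2).ncard) hne
  obtain ⟨p, q⟩ := s
  simp only [hTdef, Finset.mem_filter, Finset.mem_univ, true_and] at hsT
  obtain ⟨hp, hq⟩ := hsT
  refine ⟨p, hp, q, hq, ?_⟩
  apply Set.Subset.antisymm
  · exact Set.union_subset (hM u v p z hp hz) (hM u v z q hz hq)
  · intro w hw
    by_contra hwn
    have hint1 : (R p z ∩ R z q).Nonempty := ⟨z, hzz p, ht1 z q⟩
    have hint2 : (R p z ∩ R w z).Nonempty := ⟨z, hzz p, hzz w⟩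
    have hint3 : (R z q ∩ R w z).Nonempty := ⟨z, ht1 z q, hzz w⟩
    rcases hWP p z z q w z hint1 hint2 hint3 with h | h | h
    · exact hwn (h (ht1 w z))
    · have hsub : R p z ∪ R z q ⊂ R w z ∪ R z q := by
        constructor
        · exact Set.union_subset h Set.subset_union_right
        · intro hc
          exact hwn (hc (Set.mem_union_left _ (ht1 w z)))
      have hlt := Set.ncard_lt_ncard hsub (Set.toFinite _)
      have hle := hmax (w, q) (by simp [hTdef, hw, hq])
      simp only at hle
      omega
    · have hsub : R p z ∪ R z q ⊂ R p z ∪ R z w := by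
        constructor
        · refine Set.union_subset Set.subset_union_left ?_
          intro a ha
          rcases h ha with h1 | h1
          · exact Set.mem_union_right _ ((ht2 z w) ▸ h1)
          · exact Set.mem_union_left _ h1
        · intro hc
          refine hwn (hc ?_)
          exact Set.mem_union_right _ ((ht2 z w) ▸ ht1 w z)
      have hlt := Set.ncard_lt_ncard hsub (Set.toFinite _)
      have hle := hmax (p, w) (by simp [hTdef, hw, hp])
      simp only at hle
      omega
end
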